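/- arXiv:0901.1200 — 2 statements merged into one kernel-verified Lean document; each statement's English description precedes it below -/
import Mathlib

section
/- Let A₁₁, A₁₂, A₂₂ be Riccati data on a complex separable Hilbert space H with diag{A₁₁} − A₂₂ ≫ 0, let (sₙ) be the successive approximations, and let s̲ and s̄ be the strong limits of the even subsequence s₀, s₂, … and of the odd subsequence s₁, s₃, …, respectively. Then s̲ ≤ s̄ in the Loewner order. -/
open MeasureTheory ContinuousLinearMap Filter
open scoped ENNReal NNReal Topology

noncomputable section

/-- `ℓ²(H)`: the Hilbert space of square-summable sequences in `H`, indexed by `ℕ`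
(index `k : ℕ` corresponds to the `(k+1)`-st entry in the paper's `1`-based indexing). -/
abbrev l2 (H : Type*) [NormedAddCommGroup H] [InnerProductSpace ℂ H] : Type _ :=
  lp (fun _ : ℕ => H) 2

variable {H : Type*} [NormedAddCommGroup H] [InnerProductSpace ℂ H]

lemma memℓp_diag (q : H →L[ℂ] H) (ξ : l2 H) : Memℓp (fun k => q (ξ k)) 2 := by
  have h2 : (0:ℝ) < (2 : ℝ≥0∞).toReal := by norm_num
  apply memℓp_gen
  have hs : Summable (fun k => ‖q‖ ^ (2 : ℝ≥0∞).toReal * ‖ξ k‖ ^ (2 : ℝ≥0∞).toReal) :=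
    ((lp.memℓp ξ).summable h2).mul_left _
  refine Summable.of_nonneg_of_le (fun k => ?_) (fun k => ?_) hs
  · positivity
  · rw [← Real.mul_rpow (norm_nonneg _) (norm_nonneg _)]
    exact Real.rpow_le_rpow (norm_nonneg _) (q.le_opNorm _) (by norm_num)

/-- `diag{q}`: the bounded block-diagonal operator on `ℓ²(H)` acting componentwise,
`(diag{q} ξ)ₖ = q (ξₖ)`. -/
def diagOp (q : H →L[ℂ] H) : l2 H →L[ℂ] l2 H :=
  LinearMap.mkContinuous
    { toFun := fun ξ => ⟨fun k => q (ξ k), memℓp_diag q ξ⟩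
      map_add' := fun ξ η => by ext k; simp [lp.coeFn_add] <;> rfl
      map_smul' := fun c ξ => by ext k; simp [lp.coeFn_smul] }
    ‖q‖
    (by
      intro ξ
      have h2 : (0:ℝ) < (2 : ℝ≥0∞).toReal := by norm_num
      refine lp.norm_le_of_tsum_le h2 (by positivity) ?_
      have hξ : ‖ξ‖ ^ (2 : ℝ≥0∞).toReal = ∑' k, ‖ξ k‖ ^ (2 : ℝ≥0∞).toReal :=
        lp.norm_rpow_eq_tsum h2 ξ
      have hsum : Summable (fun k => ‖ξ k‖ ^ (2 : ℝ≥0∞).toReal) := (lp.memℓp ξ).summable h2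
      calc ∑' k, ‖(fun k => q (ξ k)) k‖ ^ (2 : ℝ≥0∞).toReal
          ≤ ∑' k, ‖q‖ ^ (2 : ℝ≥0∞).toReal * ‖ξ k‖ ^ (2 : ℝ≥0∞).toReal := by
            refine Summable.tsum_le_tsum (fun k => ?_) ?_ (hsum.mul_left _)
            · rw [← Real.mul_rpow (norm_nonneg _) (norm_nonneg _)]
              exact Real.rpow_le_rpow (norm_nonneg _) (q.le_opNorm _) (by norm_num)
            · refine Summable.of_nonneg_of_le (fun k => ?_) (fun k => ?_)
                (hsum.mul_left (‖q‖ ^ (2 : ℝ≥0∞).toReal))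
              · positivity
              · rw [← Real.mul_rpow (norm_nonneg _) (norm_nonneg _)]
                exact Real.rpow_le_rpow (norm_nonneg _) (q.le_opNorm _) (by norm_num)
        _ = (‖q‖ * ‖ξ‖) ^ (2 : ℝ≥0∞).toReal := by
            rw [tsum_mul_left, ← hξ, Real.mul_rpow (norm_nonneg _) (norm_nonneg _)])

@[simp] lemma diagOp_apply (q : H →L[ℂ] H) (ξ : l2 H) (k : ℕ) :
    (diagOp q ξ) k = q (ξ k) := rfl

/-- An operator is *strongly positive* (written `ρ ≫ 0` in the paper) if `δ • I ≤ ρ`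
(Loewner order) for some `δ > 0`.  A strongly positive operator is boundedly invertible. -/
def StronglyPositive {E : Type*} [NormedAddCommGroup E] [InnerProductSpace ℂ E]
    [CompleteSpace E] (ρ : E →L[ℂ] E) : Prop :=
  ∃ δ : ℝ, 0 < δ ∧ δ • (1 : E →L[ℂ] E) ≤ ρ

variable [CompleteSpace H]

/-- The Riccati map `ℱ(s) = A₁₁ + A₁₂ (diag{s} − A₂₂)⁻¹ A₁₂*`.  Here `Ring.inverse` is the
genuine inverse whenever `diag{s} − A₂₂` is boundedly invertible, which is guaranteed when
`diag{s} − A₂₂ ≫ 0`. -/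
def riccatiMap (A11 : H →L[ℂ] H) (A12 : l2 H →L[ℂ] H) (A22 : l2 H →L[ℂ] l2 H)
    (s : H →L[ℂ] H) : H →L[ℂ] H :=
  A11 + A12 ∘L Ring.inverse (diagOp s - A22) ∘L ContinuousLinearMap.adjoint A12

/-- The successive approximations `s₀ = A₁₁`, `s_{n+1} = ℱ(sₙ)`. -/
def riccatiSeq (A11 : H →L[ℂ] H) (A12 : l2 H →L[ℂ] H) (A22 : l2 H →L[ℂ] l2 H) :
    ℕ → (H →L[ℂ] H)
  | 0 => A11
  | n + 1 => riccatiMap A11 A12 A22 (riccatiSeq A11 A12 A22 n)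

end

/-! The Riccati map `ℱ` is antitone on `{s | A₁₁ ≤ s}` and maps every `s` there back into that
set: operator inversion is antitone on strictly positive operators and conjugation by `A₁₂`
preserves the Loewner order. Starting from `s₀ ≤ s₁`, the step `s₂ₙ ≤ s₂ₙ₊₁` gives
`s₂ₙ₊₂ = ℱ(s₂ₙ₊₁) ≤ ℱ(s₂ₙ) = s₂ₙ₊₁` and then `s₂ₙ₊₂ ≤ ℱ(s₂ₙ₊₂) = s₂ₙ₊₃`. Loewner inequalities
survive strong limits because, on a complex Hilbert space, `T ≥ 0` iff `⟪T x, x⟫ ≥ 0` in `ℂ`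
for every `x`, a closed condition. -/

section

open scoped InnerProductSpace ComplexOrder

namespace ContinuousLinearMap

variable {E F : Type*} [NormedAddCommGroup E] [InnerProductSpace ℂ E]
  [NormedAddCommGroup F] [InnerProductSpace ℂ F]

theorem isPositive_iff_inner_nonneg (T : E →L[ℂ] E) :
    T.IsPositive ↔ ∀ x, 0 ≤ ⟪T x, x⟫_ℂ := by
  -- `0 ≤ z` in `ℂ` forces `z` to be real, which accounts for the symmetry part of positivity.
  refine T.isPositive_iff_complex.trans (forall_congr' fun x => ?_)
  rw [Complex.nonneg_iff, Complex.ext_iff]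
  simp [and_comm]

theorem le_of_tendsto_apply {ι : Type*} {l : Filter ι} [l.NeBot] {S T : ι → E →L[ℂ] E}
    {S' T' : E →L[ℂ] E} (hS : ∀ x, Tendsto (fun i => S i x) l (𝓝 (S' x)))
    (hT : ∀ x, Tendsto (fun i => T i x) l (𝓝 (T' x))) (hST : ∀ᶠ i in l, S i ≤ T i) :
    S' ≤ T' := by
  refine ((T' - S').isPositive_iff_inner_nonneg).2 fun v =>
    ge_of_tendsto (x := l) (f := fun i => ⟪(T i - S i) v, v⟫_ℂ) ?_ ?_
  · simpa only [sub_apply] using ((hT v).sub (hS v)).inner tendsto_const_nhds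
  · filter_upwards [hST] with i hi
    exact ((T i - S i).isPositive_iff_inner_nonneg).1 hi v

theorem conj_adjoint_le_conj_adjoint [CompleteSpace E] [CompleteSpace F] {a b : E →L[ℂ] E}
    (hab : a ≤ b) (S : E →L[ℂ] F) : S ∘L a ∘L adjoint S ≤ S ∘L b ∘L adjoint S := by
  rw [le_def, ← comp_sub, ← sub_comp]
  exact IsPositive.conj_adjoint hab S

variable [CompleteSpace E] [CompleteSpace F] {ρ σ : E →L[ℂ] E}

theorem isPositive_conj_adjoint_ringInverse (hρ : IsStrictlyPositive ρ) (S : E →L[ℂ] F) :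
    (S ∘L Ring.inverse ρ ∘L adjoint S).IsPositive :=
  ((nonneg_iff_isPositive _).1 hρ.ringInverse.nonneg).conj_adjoint S

theorem conj_adjoint_ringInverse_le_of_le (hρ : IsStrictlyPositive ρ) (hle : ρ ≤ σ)
    (S : E →L[ℂ] F) : S ∘L Ring.inverse σ ∘L adjoint S ≤ S ∘L Ring.inverse ρ ∘L adjoint S :=
  conj_adjoint_le_conj_adjoint (CStarAlgebra.ringInverse_le_ringInverse hle hρ) S

end ContinuousLinearMap

namespace StronglyPositive

variable {E : Type*} [NormedAddCommGroup E] [InnerProductSpace ℂ E] [CompleteSpace E]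
  {ρ σ : E →L[ℂ] E}

theorem isStrictlyPositive (h : StronglyPositive ρ) : IsStrictlyPositive ρ :=
  let ⟨_, hδ, hle⟩ := h
  (isStrictlyPositive_one.smul hδ).of_le hle

theorem mono (h : StronglyPositive ρ) (hle : ρ ≤ σ) : StronglyPositive σ :=
  let ⟨δ, hδ, hρ⟩ := h
  ⟨δ, hδ, hρ.trans hle⟩

end StronglyPositive

variable {H : Type*} [NormedAddCommGroup H] [InnerProductSpace ℂ H]

theorem diagOp_sub (s t : H →L[ℂ] H) : diagOp (s - t) = diagOp s - diagOp t := by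
  ext ξ k
  simp

theorem isPositive_diagOp {p : H →L[ℂ] H} (hp : p.IsPositive) : (diagOp p).IsPositive := by
  refine (diagOp p).isPositive_iff_inner_nonneg.2 fun ξ => ?_
  rw [lp.inner_eq_tsum]
  exact tsum_nonneg fun k => p.isPositive_iff_inner_nonneg.1 hp (ξ k)

theorem diagOp_mono : Monotone (diagOp (H := H)) := fun s t hst => by
  rw [ContinuousLinearMap.le_def, ← diagOp_sub]
  exact isPositive_diagOp hst

variable [CompleteSpace H] {A11 : H →L[ℂ] H} (A12 : l2 H →L[ℂ] H) {A22 : l2 H →L[ℂ] l2 H}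

theorem StronglyPositive.diagOp_sub_of_le (hgap : StronglyPositive (diagOp A11 - A22))
    {s : H →L[ℂ] H} (hs : A11 ≤ s) : StronglyPositive (diagOp s - A22) :=
  hgap.mono (sub_le_sub_right (diagOp_mono hs) _)

theorem le_riccatiMap {s : H →L[ℂ] H} (hs : StronglyPositive (diagOp s - A22)) :
    A11 ≤ riccatiMap A11 A12 A22 s := by
  rw [ContinuousLinearMap.le_def, riccatiMap, add_sub_cancel_left]
  exact isPositive_conj_adjoint_ringInverse hs.isStrictlyPositive A12

theorem riccatiMap_antitoneOn (hgap : StronglyPositive (diagOp A11 - A22)) :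
    AntitoneOn (riccatiMap A11 A12 A22) (Set.Ici A11) := fun _ hs _ _ hst =>
  add_le_add_right (conj_adjoint_ringInverse_le_of_le
    (hgap.diagOp_sub_of_le hs).isStrictlyPositive (sub_le_sub_right (diagOp_mono hst) _) A12) A11

theorem le_riccatiSeq (hgap : StronglyPositive (diagOp A11 - A22)) (n : ℕ) :
    A11 ≤ riccatiSeq A11 A12 A22 n := by
  cases n with
  | zero => exact le_rfl
  | succ n => exact le_riccatiMap A12 (hgap.diagOp_sub_of_le (le_riccatiSeq hgap n))

theorem riccatiSeq_two_mul_le (hgap : StronglyPositive (diagOp A11 - A22)) (n : ℕ) :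
    riccatiSeq A11 A12 A22 (2 * n) ≤ riccatiSeq A11 A12 A22 (2 * n + 1) := by
  induction n with
  | zero => exact le_riccatiMap A12 (hgap.diagOp_sub_of_le le_rfl)
  | succ n ih =>
    have hanti := riccatiMap_antitoneOn A12 hgap
    have hdown : riccatiSeq A11 A12 A22 (2 * n + 2) ≤ riccatiSeq A11 A12 A22 (2 * n + 1) :=
      hanti (le_riccatiSeq A12 hgap _) (le_riccatiSeq A12 hgap _) ih
    exact hanti (le_riccatiSeq A12 hgap _) (le_riccatiSeq A12 hgap _) hdown

end

theorem riccati_even_limit_le_odd_limit_general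
    {H : Type*} [NormedAddCommGroup H] [InnerProductSpace ℂ H] [CompleteSpace H]
    (A11 : H →L[ℂ] H) (A12 : l2 H →L[ℂ] H) (A22 : l2 H →L[ℂ] l2 H)
    (hgap : StronglyPositive (diagOp A11 - A22))
    (slim sbar : H →L[ℂ] H)
    (heven : ∀ x : H, Filter.Tendsto (fun n => riccatiSeq A11 A12 A22 (2 * n) x)
      Filter.atTop (𝓝 (slim x)))
    (hodd : ∀ x : H, Filter.Tendsto (fun n => riccatiSeq A11 A12 A22 (2 * n + 1) x)
      Filter.atTop (𝓝 (sbar x))) :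
    slim ≤ sbar :=
  le_of_tendsto_apply heven hodd (.of_forall (riccatiSeq_two_mul_le A12 hgap))

/-- **Lemma 2.2 (part 3).**  The strong limit of the even successive approximations is
dominated, in the Loewner order, by the strong limit of the odd ones: `s̲ ≤ s̄`. -/
theorem riccati_even_limit_le_odd_limit
    {H : Type*} [NormedAddCommGroup H] [InnerProductSpace ℂ H] [CompleteSpace H]
    [TopologicalSpace.SeparableSpace H]
    (A11 : H →L[ℂ] H) (A12 : l2 H →L[ℂ] H) (A22 : l2 H →L[ℂ] l2 H)
    (hA11sa : IsSelfAdjoint A11) (hA22sa : IsSelfAdjoint A22)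
    (hgap : StronglyPositive (diagOp A11 - A22))
    (slim sbar : H →L[ℂ] H) (hslim : IsSelfAdjoint slim) (hsbar : IsSelfAdjoint sbar)
    (heven : ∀ x : H, Filter.Tendsto (fun n => riccatiSeq A11 A12 A22 (2 * n) x)
      Filter.atTop (𝓝 (slim x)))
    (hodd : ∀ x : H, Filter.Tendsto (fun n => riccatiSeq A11 A12 A22 (2 * n + 1) x)
      Filter.atTop (𝓝 (sbar x))) :
    slim ≤ sbar :=
  riccati_even_limit_le_odd_limit_general A11 A12 A22 hgap slim sbar heven hodd
end

section
/- Let A₁₁, A₁₂, A₂₂ be Riccati data on a complex separable Hilbert space H with diag{A₁₁} − A₂₂ ≫ 0 and A₂₂ ≥ 0 (so that A₁₁ ≫ 0), and let q₀ = A₁₁^{1/2} be the strongly positive square root of A₁₁. Set U = q₀⁻¹ ∘ A₁₂ ∘ diag{q₀}⁻¹ : ℓ²(H) → H and D = diag{q₀}⁻¹ A₂₂ diag{q₀}⁻¹, and define G(t) = I + U(diag{t} − D)⁻¹U* for selfadjoint t ∈ B(H) with diag{t} − D ≫ 0. Then a selfadjoint operator s with diag{s} − A₂₂ ≫ 0 satisfies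 the fixed point equation s = A₁₁ + A₁₂(diag{s} − A₂₂)⁻¹A₁₂* if and only if t = q₀⁻¹ s q₀⁻¹ satisfies diag{t} − D ≫ 0 and t = G(t). -/
/-!
Conjugation by `q₀⁻¹` carries the Riccati problem to its normalized form. With
`p = diag{q₀}⁻¹ = diag{q₀⁻¹}`, selfadjoint and invertible, one has
`diag{t} − D = p (diag{s} − A₂₂) p`, so strong positivity transfers and
`(diag{t} − D)⁻¹ = p⁻¹ (diag{s} − A₂₂)⁻¹ p⁻¹`; the factors `p`, `p⁻¹` cancel inside
`U (diag{t} − D)⁻¹ U*`, and `q₀⁻¹ A₁₁ q₀⁻¹ = I`, whence `G(t) = q₀⁻¹ ℱ(s) q₀⁻¹`.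
The two fixed point equations therefore differ by the invertible congruence `X ↦ q₀⁻¹ X q₀⁻¹`.
-/

open MeasureTheory ContinuousLinearMap Filter
open scoped ENNReal NNReal Topology

open scoped Ring

section Diag

variable {H : Type*} [NormedAddCommGroup H] [InnerProductSpace ℂ H] [CompleteSpace H]

lemma adjoint_diagOp (q : H →L[ℂ] H) : adjoint (diagOp q) = diagOp (adjoint q) := by
  symm
  rw [eq_adjoint_iff]
  intro ξ η
  simp only [lp.inner_eq_tsum, diagOp_apply, adjoint_inner_left]

variable (H) in
noncomputable def diagOpStarAlgHom : (H →L[ℂ] H) →⋆ₐ[ℂ] (l2 H →L[ℂ] l2 H) where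
  toFun := diagOp
  map_one' := rfl
  map_mul' _ _ := rfl
  map_zero' := rfl
  map_add' _ _ := rfl
  commutes' _ := rfl
  map_star' q := by simp only [star_eq_adjoint, adjoint_diagOp]

@[simp] lemma coe_diagOpStarAlgHom : ⇑(diagOpStarAlgHom H) = diagOp := rfl

end Diag

lemma map_ringInverse_of_isUnit {M N F : Type*} [MonoidWithZero M] [MonoidWithZero N]
    [FunLike F M N] [MonoidHomClass F M N] (f : F) {a : M} (ha : IsUnit a) :
    (f a)⁻¹ʳ = f a⁻¹ʳ := by
  lift a to Mˣ using ha
  have := Ring.inverse_unit (Units.map (f : M →* N) a)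
  simpa only [Units.coe_map, Units.coe_map_inv, MonoidHom.coe_coe, Ring.inverse_unit] using this

lemma stronglyPositive_iff_isStrictlyPositive {E : Type*} [NormedAddCommGroup E]
    [InnerProductSpace ℂ E] [CompleteSpace E] {ρ : E →L[ℂ] E} :
    StronglyPositive ρ ↔ IsStrictlyPositive ρ := by
  simp only [StronglyPositive, ← Algebra.algebraMap_eq_smul_one]
  constructor
  · rintro ⟨δ, hδ, hle⟩
    exact (isStrictlyPositive_algebraMap hδ).of_le hle
  · intro h
    rcases subsingleton_or_nontrivial (E →L[ℂ] E) with _ | _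
    · exact ⟨1, one_pos, (Subsingleton.elim _ _).le⟩
    exact (CFC.exists_pos_algebraMap_le_iff h.isSelfAdjoint).2 fun _ hx ↦ h.spectrum_pos hx

lemma comp_ringInverse_star_conj_comp_adjoint {𝕜 E F : Type*} [RCLike 𝕜]
    [NormedAddCommGroup E] [InnerProductSpace 𝕜 E] [CompleteSpace E]
    [NormedAddCommGroup F] [InnerProductSpace 𝕜 F] [CompleteSpace F]
    (B : E →L[𝕜] F) {v : E →L[𝕜] E} (hv : IsUnit v) (X : E →L[𝕜] E) :
    (B ∘L v) ∘L (star v * X * v)⁻¹ʳ ∘L adjoint (B ∘L v) = B ∘L X⁻¹ʳ ∘L adjoint B := by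
  have hv' : IsUnit (adjoint v) := by simpa only [star_eq_adjoint] using hv.star
  have cancel : ∀ y, v (v⁻¹ʳ y) = y := fun y ↦
    congr($(Ring.mul_inverse_cancel v hv) y)
  have cancel' : ∀ y, (adjoint v)⁻¹ʳ (adjoint v y) = y := fun y ↦
    congr($(Ring.inverse_mul_cancel (adjoint v) hv') y)
  rw [Ring.inverse_mul (Or.inr hv), Ring.inverse_mul (Or.inl hv.star), star_eq_adjoint,
    adjoint_comp]
  ext x
  simp only [comp_apply, mul_apply_eq_comp, cancel, cancel']

section Normalization

variable {H : Type*} [NormedAddCommGroup H] [InnerProductSpace ℂ H] [CompleteSpace H]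
  {q : H →L[ℂ] H}

lemma diagOp_conj_sub_conj (hq : IsUnit q) (hq_sa : IsSelfAdjoint q) (s : H →L[ℂ] H)
    (A22 : l2 H →L[ℂ] l2 H) :
    diagOp (q⁻¹ʳ ∘L s ∘L q⁻¹ʳ) - (diagOp q)⁻¹ʳ ∘L A22 ∘L (diagOp q)⁻¹ʳ =
      star (diagOp q)⁻¹ʳ * (diagOp s - A22) * (diagOp q)⁻¹ʳ := by
  have hp : IsSelfAdjoint (diagOp q)⁻¹ʳ := (hq_sa.map (diagOpStarAlgHom H)).ringInverse
  rw [hp.star_eq, ← coe_diagOpStarAlgHom, map_ringInverse_of_isUnit _ hq]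
  simp only [← mul_def, map_mul, mul_sub, sub_mul, mul_assoc]

lemma conj_riccatiMap (hq : IsUnit q) (hq_sa : IsSelfAdjoint q) (A12 : l2 H →L[ℂ] H)
    (A22 : l2 H →L[ℂ] l2 H) (s : H →L[ℂ] H) :
    q⁻¹ʳ * riccatiMap (q * q) A12 A22 s * q⁻¹ʳ =
      1 + (q⁻¹ʳ ∘L A12) ∘L (diagOp s - A22)⁻¹ʳ ∘L adjoint (q⁻¹ʳ ∘L A12) := by
  have hq_inv : q⁻¹ʳ * (q * q) * q⁻¹ʳ = 1 := by
    rw [← mul_assoc, Ring.inverse_mul_cancel q hq, one_mul, Ring.mul_inverse_cancel q hq]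
  rw [riccatiMap, mul_add, add_mul, hq_inv, adjoint_comp, hq_sa.ringInverse.adjoint_eq]
  rfl

end Normalization

theorem riccati_fixed_point_iff_normalized_fixed_point_general
    {H : Type*} [NormedAddCommGroup H] [InnerProductSpace ℂ H] [CompleteSpace H]
    (A11 : H →L[ℂ] H) (A12 : l2 H →L[ℂ] H) (A22 : l2 H →L[ℂ] l2 H)
    (q0 : H →L[ℂ] H) (hq0 : StronglyPositive q0) (hq0sq : q0 * q0 = A11)
    (s : H →L[ℂ] H) (hspos : StronglyPositive (diagOp s - A22)) :
    letI U : l2 H →L[ℂ] H := Ring.inverse q0 ∘L A12 ∘L Ring.inverse (diagOp q0)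
    letI D : l2 H →L[ℂ] l2 H :=
      Ring.inverse (diagOp q0) ∘L A22 ∘L Ring.inverse (diagOp q0)
    letI t : H →L[ℂ] H := Ring.inverse q0 ∘L s ∘L Ring.inverse q0
    (riccatiMap A11 A12 A22 s = s ↔
      StronglyPositive (diagOp t - D) ∧
        1 + U ∘L Ring.inverse (diagOp t - D) ∘L ContinuousLinearMap.adjoint U = t) := by
  subst hq0sq
  have hq0_pos : IsStrictlyPositive q0 := stronglyPositive_iff_isStrictlyPositive.1 hq0
  have hq0_unit := hq0_pos.isUnit
  have hq0_sa := hq0_pos.isSelfAdjoint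
  have hp_unit : IsUnit (diagOp q0)⁻¹ʳ := (hq0_unit.map (diagOpStarAlgHom H)).ringInverse
  have hr_unit : IsUnit q0⁻¹ʳ := hq0_unit.ringInverse
  have hG : 1 + (q0⁻¹ʳ ∘L A12 ∘L (diagOp q0)⁻¹ʳ) ∘L
        (diagOp (q0⁻¹ʳ ∘L s ∘L q0⁻¹ʳ) - (diagOp q0)⁻¹ʳ ∘L A22 ∘L (diagOp q0)⁻¹ʳ)⁻¹ʳ ∘L
          adjoint (q0⁻¹ʳ ∘L A12 ∘L (diagOp q0)⁻¹ʳ) =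
        q0⁻¹ʳ * riccatiMap (q0 * q0) A12 A22 s * q0⁻¹ʳ := by
    rw [diagOp_conj_sub_conj hq0_unit hq0_sa, conj_riccatiMap hq0_unit hq0_sa,
      ← comp_ringInverse_star_conj_comp_adjoint (q0⁻¹ʳ ∘L A12) hp_unit]
    rfl
  rw [hG, diagOp_conj_sub_conj hq0_unit hq0_sa, stronglyPositive_iff_isStrictlyPositive,
    hp_unit.isStrictlyPositive_star_left_conjugate_iff, ← stronglyPositive_iff_isStrictlyPositive]
  exact ⟨fun h ↦ ⟨hspos, by rw [h]; rfl⟩,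
    fun ⟨_, h⟩ ↦ hr_unit.mul_left_cancel (hr_unit.mul_right_cancel h)⟩

/-- **The reduction (2.31)–(2.34) in Theorem 2.5.**  Let `A₂₂ ≥ 0` (so `A₁₁ ≫ 0`), let
`q₀ = A₁₁^{1/2}` be the strongly positive square root of `A₁₁`, and set
`U = q₀⁻¹ A₁₂ diag{q₀}⁻¹`, `D = diag{q₀}⁻¹ A₂₂ diag{q₀}⁻¹`,
`G(t) = I + U(diag{t} − D)⁻¹U*`.  Then a selfadjoint `s` with `diag{s} − A₂₂ ≫ 0` is a fixed
point of `ℱ` iff `t = q₀⁻¹ s q₀⁻¹` satisfies `diag{t} − D ≫ 0` and `t = G(t)`. -/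
theorem riccati_fixed_point_iff_normalized_fixed_point
    {H : Type*} [NormedAddCommGroup H] [InnerProductSpace ℂ H] [CompleteSpace H]
    [TopologicalSpace.SeparableSpace H]
    (A11 : H →L[ℂ] H) (A12 : l2 H →L[ℂ] H) (A22 : l2 H →L[ℂ] l2 H)
    (hA11sa : IsSelfAdjoint A11) (hA22sa : IsSelfAdjoint A22)
    (hgap : StronglyPositive (diagOp A11 - A22)) (hA22 : 0 ≤ A22)
    (q0 : H →L[ℂ] H) (hq0 : StronglyPositive q0) (hq0sq : q0 * q0 = A11)
    (s : H →L[ℂ] H) (hs : IsSelfAdjoint s) (hspos : StronglyPositive (diagOp s - A22)) :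
    letI U : l2 H →L[ℂ] H := Ring.inverse q0 ∘L A12 ∘L Ring.inverse (diagOp q0)
    letI D : l2 H →L[ℂ] l2 H :=
      Ring.inverse (diagOp q0) ∘L A22 ∘L Ring.inverse (diagOp q0)
    letI t : H →L[ℂ] H := Ring.inverse q0 ∘L s ∘L Ring.inverse q0
    (riccatiMap A11 A12 A22 s = s ↔
      StronglyPositive (diagOp t - D) ∧
        1 + U ∘L Ring.inverse (diagOp t - D) ∘L ContinuousLinearMap.adjoint U = t) :=
  riccati_fixed_point_iff_normalized_fixed_point_general A11 A12 A22 q0 hq0 hq0sq s hspos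
end
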